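/- arXiv:1501.00163 — 5 statements merged into one kernel-verified Lean document; each statement's English description precedes it below -/
import Mathlib

section
/- Let τ be a nonnegative integer with τ < deg(m_i) for all i ∈ {1, …, L} and τ < max_{1 ≤ i ≤ L} τ_{i(⌊(w^{(i)} − 1)/2⌋ + 1)}. Then every c(x) ∈ F[x] with deg(c) < deg(M) such that deg([c]_{m_i}) ≤ τ for all i ∈ {1, …, L} satisfies deg(c) ≤ τ. (Robust Chinese Remainder Theorem for polynomials: if all residues of a polynomial a(x) with deg(a) < deg(M) are corrupted by errors of degree at most τ, then a(x) can be reconstructed with reconstruction error of degree at most τ; equivalently, two polynomials of degree less than deg(M) whose residues modulo every m_i differ by degree at most τ themselves differ by degree at most τ.) -/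
/-!
Fix `i` attaining the maximum and put `r = [c]_{m_i}`. For every `k`, the residues `[c]_{m_k}`
and `r` both have degree `≤ τ` and agree modulo `gcd(m_i, m_k)`, so they coincide as soon as
`τ < deg gcd(m_i, m_k)`. Writing `c - r = m_i q`, the quotient `q` is then divisible by
`Γ_{ki} = m_k / gcd(m_i, m_k)` for all those `k`; by the choice of `i` at most
`⌊(w⁽ⁱ⁾ - 1)/2⌋ < max 1 w⁽ⁱ⁾` of the `Γ_{ki}` fail to divide `q`. Since `deg q < deg lcm_k Γ_{ki}`
(because `M ∣ m_i · lcm_k Γ_{ki}`), the definition of the code distance `w⁽ⁱ⁾` forces `q = 0`,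
i.e. `c = r`.
-/

open Polynomial
open scoped Classical

/-- The code distance of the polynomial remainder code with moduli `m i`, `i ∈ s`. -/
noncomputable def codeDist {F : Type*} [Field F] {ι : Type*} (s : Finset ι)
    (m : ι → Polynomial F) : ℕ :=
  sInf {k | ∃ a : Polynomial F, a ≠ 0 ∧ a.degree < (s.lcm m).degree ∧
    (s.filter fun i => ¬ m i ∣ a).card = k}

/-- The `j`-th smallest element (1-indexed) of a multiset of natural numbers. -/
noncomputable def nthSmallest (s : Multiset ℕ) (j : ℕ) : ℕ :=
  (s.sort (· ≤ ·)).getD (j - 1) 0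

lemma card_filter_le_of_lt_nthSmallest {s : Multiset ℕ} {j τ : ℕ}
    (h : τ < nthSmallest s (j + 1)) : (s.filter (· ≤ τ)).card ≤ j := by
  set l := s.sort (· ≤ ·)
  change τ < l.getD j 0 at h
  have hj : j < l.length := by
    by_contra! hj
    rw [List.getD_eq_default _ _ hj] at h
    omega
  rw [List.getD_eq_getElem _ _ hj] at h
  have hdrop : (l.drop j).filter (· ≤ τ) = [] := by
    have hsorted := (s.pairwise_sort (· ≤ ·)).drop (i := j)
    rw [List.drop_eq_getElem_cons hj, List.pairwise_cons] at hsorted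
    rw [List.drop_eq_getElem_cons hj, List.filter_eq_nil_iff]
    intro x hx
    rw [decide_eq_true_eq, not_le]
    rcases List.mem_cons.mp hx with rfl | hx
    exacts [h, h.trans_le (hsorted.1 x hx)]
  calc (s.filter (· ≤ τ)).card = (l.filter (· ≤ τ)).length := by
        rw [← Multiset.coe_card, ← Multiset.filter_coe, Multiset.sort_eq]
    _ = ((l.take j).filter (· ≤ τ)).length := by
        conv_lhs => rw [← List.take_append_drop j l, List.filter_append, hdrop, List.append_nil]
    _ ≤ j := (List.length_filter_le _ _).trans (List.length_take_le _ _)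

namespace Polynomial

variable {F : Type*} [Field F]

theorem monic_gcd_of_ne_zero {p q : F[X]} (h : gcd p q ≠ 0) : (gcd p q).Monic :=
  normalize_gcd p q ▸ monic_normalize h

theorem gcd_mul_divByMonic_gcd_of_dvd {p q r : F[X]} (h : gcd p q ∣ r) :
    gcd p q * (r /ₘ gcd p q) = r := by
  by_cases h0 : gcd p q = 0
  · rw [h0] at h ⊢
    rw [zero_mul, eq_zero_of_zero_dvd h]
  · conv_rhs => rw [← modByMonic_add_div r (gcd p q),
      (modByMonic_eq_zero_iff_dvd (monic_gcd_of_ne_zero h0)).mpr h, zero_add]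

theorem divByMonic_gcd_dvd_of_dvd_mul {p q r : F[X]} (hq : q ≠ 0) (h : q ∣ p * r) :
    q /ₘ gcd p q ∣ r := by
  have hg : gcd p q ≠ 0 := fun h0 => hq ((gcd_eq_zero_iff p q).mp h0).2
  have hcop : IsCoprime (q /ₘ gcd p q) (p /ₘ gcd p q) := by
    simp only [divByMonic_eq_div _ (monic_gcd_of_ne_zero hg)]
    exact (isCoprime_div_gcd_div_gcd hq).symm
  refine hcop.dvd_of_dvd_mul_left ((mul_dvd_mul_iff_left hg).mp ?_)
  rwa [← mul_assoc, gcd_mul_divByMonic_gcd_of_dvd (gcd_dvd_left p q),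
    gcd_mul_divByMonic_gcd_of_dvd (gcd_dvd_right p q)]

theorem modByMonic_eq_of_dvd_of_degree_lt {c p q d : F[X]} (hdp : d ∣ p) (hdq : d ∣ q)
    (hp : (c %ₘ p).degree < d.degree) (hq : (c %ₘ q).degree < d.degree) :
    c %ₘ p = c %ₘ q := by
  refine sub_eq_zero.mp (eq_zero_of_dvd_of_degree_lt ?_
    ((degree_sub_le _ _).trans_lt (max_lt hp hq)))
  rw [← sub_sub_sub_cancel_right _ _ c]
  exact dvd_sub (hdp.trans (dvd_modByMonic_sub c p)) (hdq.trans (dvd_modByMonic_sub c q))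

variable {ι : Type*}

/-- `Γ_{ki}` in the paper's notation. -/
noncomputable def reducedModulus (m : ι → F[X]) (i k : ι) : F[X] := m k /ₘ gcd (m i) (m k)

theorem gcd_mul_reducedModulus (m : ι → F[X]) (i k : ι) :
    gcd (m i) (m k) * reducedModulus m i k = m k :=
  gcd_mul_divByMonic_gcd_of_dvd (gcd_dvd_right _ _)

variable [DecidableEq ι] (s : Finset ι) {m : ι → F[X]} (i : ι)

theorem lcm_dvd_mul_lcm_reducedModulus :
    s.lcm m ∣ m i * (s.erase i).lcm (reducedModulus m i) := by
  refine Finset.lcm_dvd fun k hk => ?_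
  by_cases hki : k = i
  · exact hki ▸ dvd_mul_right _ _
  · rw [← gcd_mul_reducedModulus m i k]
    exact mul_dvd_mul (gcd_dvd_left _ _) (Finset.dvd_lcm (Finset.mem_erase.mpr ⟨hki, hk⟩))

theorem degree_lt_lcm_reducedModulus (hm : ∀ k, m k ≠ 0) {q : F[X]}
    (hq : (m i * q).degree < (s.lcm m).degree) :
    q.degree < ((s.erase i).lcm (reducedModulus m i)).degree := by
  have hlcm : (s.erase i).lcm (reducedModulus m i) ≠ 0 := Finset.lcm_ne_zero_iff.mpr
    fun k _ => right_ne_zero_of_mul ((gcd_mul_reducedModulus m i k).symm ▸ hm k)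
  have hle := degree_le_of_dvd (lcm_dvd_mul_lcm_reducedModulus s i) (mul_ne_zero (hm i) hlcm)
  rw [degree_mul] at hq hle
  exact (WithBot.add_lt_add_iff_left (degree_ne_bot.mpr (hm i))).mp (hq.trans_le hle)

end Polynomial

open Polynomial

theorem eq_zero_of_card_filter_not_dvd_lt_codeDist {F : Type*} [Field F] {ι : Type*}
    {s : Finset ι} {m : ι → F[X]} {a : F[X]} (ha : a.degree < (s.lcm m).degree)
    (h : (s.filter fun k => ¬ m k ∣ a).card < max 1 (codeDist s m)) : a = 0 := by
  by_contra ha0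
  have hdist : codeDist s m ≤ (s.filter fun k => ¬ m k ∣ a).card :=
    Nat.sInf_le ⟨a, ha0, ha, rfl⟩
  have hne : (s.filter fun k => ¬ m k ∣ a).card ≠ 0 := by
    intro h0
    refine not_dvd_of_degree_lt ha0 ha (Finset.lcm_dvd fun k hk => ?_)
    by_contra hk'
    exact Finset.card_ne_zero.mpr ⟨k, Finset.mem_filter.mpr ⟨hk, hk'⟩⟩ h0
  omega

theorem stmt6_general {F : Type*} [Field F] {L : ℕ}
    (m : Fin L → Polynomial F)
    (hmonic : ∀ i, (m i).Monic)
    (w : Fin L → ℕ)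
    (hw : ∀ i, w i = codeDist (Finset.univ.erase i)
      (fun j => m j /ₘ gcd (m i) (m j)))
    (τ : ℕ)
    (hτ : τ < Finset.univ.sup (fun i : Fin L => nthSmallest
      ((Finset.univ.erase i).val.map fun k => (gcd (m i) (m k)).natDegree)
      ((w i - 1) / 2 + 1))) :
    ∀ c : Polynomial F, c.degree < (Finset.univ.lcm m).degree →
      (∀ i, (c %ₘ m i).degree ≤ (τ : WithBot ℕ)) →
      c.degree ≤ (τ : WithBot ℕ) := by
  intro c hc hres
  obtain ⟨i, -, hi⟩ := Finset.lt_sup_iff.mp hτ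
  obtain ⟨q, hq⟩ := dvd_modByMonic_sub c (m i)
  have hM : Finset.univ.lcm m ≠ 0 :=
    Finset.lcm_ne_zero_iff.mpr fun k _ => (hmonic k).ne_zero
  have hq_deg : q.degree < ((Finset.univ.erase i).lcm (reducedModulus m i)).degree := by
    refine degree_lt_lcm_reducedModulus _ i (fun k => (hmonic k).ne_zero) ?_
    rw [← hq]
    refine (degree_sub_le _ _).trans_lt (max_lt ?_ hc)
    exact (degree_modByMonic_lt c (hmonic i)).trans_le
      (degree_le_of_dvd (Finset.dvd_lcm (Finset.mem_univ i)) hM)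
  -- `c` has the same residue modulo `m k` as modulo `m i` once `deg gcd(m i, m k) > τ`
  have hdvd : ∀ k, τ < (gcd (m i) (m k)).natDegree → reducedModulus m i k ∣ q := by
    intro k hk
    have hk' : (τ : WithBot ℕ) < (gcd (m i) (m k)).degree := coe_lt_degree.mpr hk
    have hres_eq : c %ₘ m k = c %ₘ m i := modByMonic_eq_of_dvd_of_degree_lt
      (gcd_dvd_right _ _) (gcd_dvd_left _ _) ((hres k).trans_lt hk') ((hres i).trans_lt hk')
    refine divByMonic_gcd_dvd_of_dvd_mul (hmonic k).ne_zero ?_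
    rw [← hq, ← hres_eq]
    exact dvd_modByMonic_sub c (m k)
  have hq0 : q = 0 := by
    refine eq_zero_of_card_filter_not_dvd_lt_codeDist hq_deg ?_
    calc _ ≤ ((Finset.univ.erase i).filter fun k => (gcd (m i) (m k)).natDegree ≤ τ).card :=
          Finset.card_le_card <| Finset.monotone_filter_right _
            fun k _ hk => not_lt.mp fun hlt => hk (hdvd k hlt)
      _ ≤ (w i - 1) / 2 := by
          have h := card_filter_le_of_lt_nthSmallest hi
          rwa [Multiset.filter_map, Multiset.card_map] at h
      _ < max 1 (w i) := by omega
      _ = _ := congrArg (max 1) (hw i)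
  rw [hq0, mul_zero, sub_eq_zero] at hq
  exact hq ▸ hres i

/-- robust CRT for polynomials. If
`τ < max_{1≤i≤L} τ_{i(⌊(w⁽ⁱ⁾−1)/2⌋+1)}` (and `τ < deg m_i` for all `i`), then any
`c` with `deg c < deg M` all of whose residues `[c]_{m_i}` have degree at most `τ`
itself has degree at most `τ`. -/
theorem stmt6 {F : Type*} [Field F] {L : ℕ} (hL : 2 ≤ L)
    (m : Fin L → Polynomial F)
    (hmonic : ∀ i, (m i).Monic)
    (hdist : Function.Injective m)
    (hdeg : ∀ i, 0 < (m i).degree)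
    (hm_lt : ∀ i, (m i).degree < (Finset.univ.lcm m).degree)
    (w : Fin L → ℕ)
    (hw : ∀ i, w i = codeDist (Finset.univ.erase i)
      (fun j => m j /ₘ gcd (m i) (m j)))
    (τ : ℕ)
    (hτm : ∀ i, (τ : WithBot ℕ) < (m i).degree)
    (hτ : τ < Finset.univ.sup (fun i : Fin L => nthSmallest
      ((Finset.univ.erase i).val.map fun k => (gcd (m i) (m k)).natDegree)
      ((w i - 1) / 2 + 1))) :
    ∀ c : Polynomial F, c.degree < (Finset.univ.lcm m).degree →
      (∀ i, (c %ₘ m i).degree ≤ (τ : WithBot ℕ)) →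
      c.degree ≤ (τ : WithBot ℕ) :=
  stmt6_general m hmonic w hw τ hτ
end

section
/- For every i ∈ {1, …, L}, w^{(i)} ≥ d, where d is the code distance of the polynomial remainder code with moduli m_1(x), …, m_L(x) and w^{(i)} is the code distance of the polynomial remainder code with the L−1 moduli Γ_{ji}(x) = m_j(x)/gcd(m_i(x), m_j(x)), j ≠ i. -/
open Polynomial
open scoped Classical

/-!
Let `k` realise the distance `w⁽ⁱ⁾`, i.e. `k ≠ 0`, `deg k < deg N` with `N = lcm_{j ≠ i} Γ_{ji}`,
and `Γ_{ji} ∤ k` for exactly `w⁽ⁱ⁾` indices. Since `m_i Γ_{ji}` is an associate of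
`lcm(m_i, m_j)`, the modulus `M` is an associate of `m_i N`, so `a = m_i k` is a nonzero
polynomial with `deg a < deg M`. Every `m_j ∤ a` has `j ≠ i` and `Γ_{ji} ∤ k`, because
`m_j ∣ m_i Γ_{ji}`; hence `d ≤ w⁽ⁱ⁾`. As `deg M > deg m_i`, also `deg N > 0`, so the set
defining `w⁽ⁱ⁾` is nonempty and its infimum is attained.
-/

namespace Polynomial

variable {F : Type*} [Field F]

theorem gcd_mul_divByMonic_gcd (a b : F[X]) : gcd a b * (b /ₘ gcd a b) = b := by
  by_cases hb : b = 0
  · simp [hb]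
  have hmonic : (gcd a b).Monic := by
    simpa only [normalize_gcd] using monic_normalize (gcd_ne_zero_of_right hb)
  simpa [(modByMonic_eq_zero_iff_dvd hmonic).mpr (gcd_dvd_right a b)] using
    modByMonic_add_div b (gcd a b)

theorem dvd_mul_divByMonic_gcd (a b : F[X]) : b ∣ a * (b /ₘ gcd a b) := by
  conv_lhs => rw [← gcd_mul_divByMonic_gcd a b]
  exact mul_dvd_mul_right (gcd_dvd_left a b) _

theorem associated_mul_divByMonic_gcd_lcm (a b : F[X]) :
    Associated (a * (b /ₘ gcd a b)) (lcm a b) := by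
  by_cases hg : gcd a b = 0
  · obtain ⟨rfl, rfl⟩ := (gcd_eq_zero_iff a b).mp hg
    simp
  refine (Associated.of_mul_left ?_ (Associated.refl (gcd a b)) hg).symm
  have hab : gcd a b * (a * (b /ₘ gcd a b)) = a * b := by
    conv_rhs => rw [← gcd_mul_divByMonic_gcd a b]
    ring
  rw [hab]
  exact gcd_mul_lcm a b

end Polynomial

section RemainderCode

variable {F : Type*} [Field F] {ι : Type*}

/-- `residualModuli m i j` is the paper's `Γ_{ji}`. -/
noncomputable def residualModuli (m : ι → F[X]) (i : ι) : ι → F[X] :=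
  fun j => m j /ₘ gcd (m i) (m j)

theorem codeDist_le_card {s : Finset ι} {m : ι → F[X]} {a : F[X]} (ha : a ≠ 0)
    (hdeg : a.degree < (s.lcm m).degree) :
    codeDist s m ≤ (s.filter fun i => ¬ m i ∣ a).card :=
  Nat.sInf_le ⟨a, ha, hdeg, rfl⟩

theorem exists_card_eq_codeDist {s : Finset ι} {m : ι → F[X]} (hdeg : 0 < (s.lcm m).degree) :
    ∃ a : F[X], a ≠ 0 ∧ a.degree < (s.lcm m).degree ∧
      (s.filter fun i => ¬ m i ∣ a).card = codeDist s m := by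
  have hne : {k | ∃ a : F[X], a ≠ 0 ∧ a.degree < (s.lcm m).degree ∧
      (s.filter fun i => ¬ m i ∣ a).card = k}.Nonempty :=
    ⟨_, 1, one_ne_zero, by simpa using hdeg, rfl⟩
  exact Nat.sInf_mem hne

variable [DecidableEq ι]

theorem associated_lcm_mul_lcm_erase_residualModuli {s : Finset ι} {i : ι} (hi : i ∈ s)
    (m : ι → F[X]) :
    Associated (s.lcm m) (m i * (s.erase i).lcm (residualModuli m i)) := by
  refine associated_of_dvd_dvd (Finset.lcm_dvd fun j hj => ?_) ?_
  · by_cases hji : j = i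
    · exact hji ▸ dvd_mul_right _ _
    exact (dvd_mul_divByMonic_gcd (m i) (m j)).trans <|
      mul_dvd_mul_left _ (Finset.dvd_lcm (Finset.mem_erase.mpr ⟨hji, hj⟩))
  obtain ⟨Q, hQ⟩ : m i ∣ s.lcm m := Finset.dvd_lcm hi
  rw [hQ]
  by_cases hmi : m i = 0
  · simp [hmi]
  refine mul_dvd_mul_left _ (Finset.lcm_dvd fun j hj => ?_)
  refine (mul_dvd_mul_iff_left hmi).mp ?_
  rw [← hQ]
  exact (associated_mul_divByMonic_gcd_lcm (m i) (m j)).dvd.trans <|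
    lcm_dvd (Finset.dvd_lcm hi) (Finset.dvd_lcm (Finset.mem_of_mem_erase hj))

theorem filter_not_dvd_mul_subset {s : Finset ι} (m : ι → F[X]) (i : ι) (k : F[X]) :
    (s.filter fun j => ¬ m j ∣ m i * k) ⊆
      ((s.erase i).filter fun j => ¬ residualModuli m i j ∣ k) := by
  intro j hj
  obtain ⟨hjs, hndvd⟩ := Finset.mem_filter.mp hj
  have hji : j ≠ i := by
    rintro rfl
    exact hndvd (dvd_mul_right _ _)
  refine Finset.mem_filter.mpr ⟨Finset.mem_erase.mpr ⟨hji, hjs⟩, fun hk => hndvd ?_⟩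
  exact (dvd_mul_divByMonic_gcd (m i) (m j)).trans (mul_dvd_mul_left _ hk)

theorem codeDist_le_codeDist_erase_residualModuli {s : Finset ι} {m : ι → F[X]} {i : ι}
    (hi : i ∈ s) (hdeg : (m i).degree < (s.lcm m).degree) :
    codeDist s m ≤ codeDist (s.erase i) (residualModuli m i) := by
  set N := (s.erase i).lcm (residualModuli m i)
  have hM : (s.lcm m).degree = (m i).degree + N.degree := by
    rw [degree_eq_degree_of_associated (associated_lcm_mul_lcm_erase_residualModuli hi m),
      degree_mul]
  have hmi : m i ≠ 0 := by
    rintro h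
    simp [hM, h] at hdeg
  have hN : 0 < N.degree := by
    by_contra! h
    exact (hdeg.trans_le (hM ▸ add_le_of_nonpos_right h)).false
  obtain ⟨k, hk, hkdeg, hkcard⟩ := exists_card_eq_codeDist hN
  calc codeDist s m ≤ (s.filter fun j => ¬ m j ∣ m i * k).card := by
        refine codeDist_le_card (mul_ne_zero hmi hk) ?_
        rw [hM, degree_mul]
        exact WithBot.add_lt_add_left (degree_ne_bot.mpr hmi) hkdeg
    _ ≤ _ := Finset.card_le_card (filter_not_dvd_mul_subset m i k)
    _ = _ := hkcard

end RemainderCode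

theorem stmt7_general {F : Type*} [Field F] {L : ℕ}
    (m : Fin L → Polynomial F)
    (hm_lt : ∀ i, (m i).degree < (Finset.univ.lcm m).degree) :
    ∀ i : Fin L,
      codeDist Finset.univ m ≤
        codeDist (Finset.univ.erase i) (fun j => m j /ₘ gcd (m i) (m j)) :=
  fun i => codeDist_le_codeDist_erase_residualModuli (Finset.mem_univ i) (hm_lt i)

/-- For every `i`, the code distance `w⁽ⁱ⁾` of the polynomial remainder
code with the `L−1` moduli `Γ_{ji} = m_j / gcd(m_i, m_j)`, `j ≠ i`, is at least the
code distance `d` of the code with moduli `m_1, …, m_L`. -/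
theorem stmt7 {F : Type*} [Field F] {L : ℕ} (hL : 2 ≤ L)
    (m : Fin L → Polynomial F)
    (hmonic : ∀ i, (m i).Monic)
    (hdist : Function.Injective m)
    (hdeg : ∀ i, 0 < (m i).degree)
    (hm_lt : ∀ i, (m i).degree < (Finset.univ.lcm m).degree) :
    ∀ i : Fin L,
      codeDist Finset.univ m ≤
        codeDist (Finset.univ.erase i) (fun j => m j /ₘ gcd (m i) (m j)) :=
  stmt7_general m hm_lt
end

section
/- Let d be the code distance of the polynomial remainder code with moduli m_1(x), …, m_L(x), let τ_1 = min_{2 ≤ j ≤ L} deg(gcd(m_1(x), m_j(x))), and let λ be a nonnegative integer with λ < τ_1. Let a(x), b(x) ∈ F[x] with deg(a) < deg(M) and deg(b) < deg(M), and let ã_i(x) (1 ≤ i ≤ L) satisfy deg(ã_i) < deg(m_i); set e_i(x) = ã_i(x) − [a]_{m_i}(x) and f_i(x) = ã_i(x) − [b]_{m_i}(x). If the number of indices i with deg(e_i) > λ is at most ⌊(d−1)/2⌋, the number of indices i with deg(f_i) > λ is at most ⌊(d−1)/2⌋, deg(e_1) ≤ λ, and deg(f_1) ≤ λ, then a(x)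 − [a]_{m_1}(x) = b(x) − [b]_{m_1}(x); in particular, the folding polynomials of a and b with respect to m_1 coincide and deg(a − b) ≤ λ. (The folding polynomial k_1(x) is accurately determined whenever the reference residue has at most a bounded error.) -/
open Polynomial
open scoped Classical

/-!
Put `c = a - b` and `ρ = [c]_{m_1}`; since `[c]_{m_i} = f_i - e_i`, `deg ρ ≤ λ`. At every index `i`
where both `e_i` and `f_i` have degree at most `λ`, the difference `[c]_{m_i} - ρ` has degree at
most `λ < τ_1 ≤ deg d_{1i}` and is divisible by `d_{1i}`, so it vanishes and `m_i ∣ c - ρ`. Hence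
`c - ρ`, a polynomial of degree below `deg M`, is a codeword of weight at most
`2 ⌊(d-1)/2⌋ < d`, so it is zero: `a - b = ρ`.
-/

namespace Polynomial

theorem dvd_sub_modByMonic {R : Type*} [CommRing R] (p q : R[X]) : q ∣ p - p %ₘ q := by
  rw [modByMonic_eq_sub_mul_div p q, sub_sub_cancel]
  exact dvd_mul_right q _

theorem degree_sub_modByMonic_le {R : Type*} [CommRing R] (p q : R[X]) :
    (p - p %ₘ q).degree ≤ p.degree :=
  (degree_sub_le _ _).trans (max_le le_rfl degree_modByMonic_le_left)

variable {F : Type*} [Field F]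

/-- The hypothesis forces `c %ₘ q = c %ₘ p`, since their difference is divisible by `gcd p q`. -/
theorem dvd_sub_modByMonic_of_degree_lt_gcd {c p q : F[X]}
    (h : (c %ₘ q - c %ₘ p).degree < (gcd p q).degree) : q ∣ c - c %ₘ p := by
  have hdvd : gcd p q ∣ c %ₘ q - c %ₘ p := by
    rw [show c %ₘ q - c %ₘ p = (c - c %ₘ p) - (c - c %ₘ q) by ring]
    exact dvd_sub ((gcd_dvd_left p q).trans (dvd_sub_modByMonic c p))
      ((gcd_dvd_right p q).trans (dvd_sub_modByMonic c q))
  rw [← sub_eq_zero.mp (eq_zero_of_dvd_of_degree_lt hdvd h)]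
  exact dvd_sub_modByMonic c q

end Polynomial

section CodeDist

variable {F : Type*} [Field F] {ι : Type*} {s : Finset ι} {m : ι → F[X]}

theorem codeDist_le_card_filter_not_dvd {a : F[X]} (ha0 : a ≠ 0)
    (ha : a.degree < (s.lcm m).degree) : codeDist s m ≤ (s.filter fun i => ¬ m i ∣ a).card :=
  Nat.sInf_le ⟨a, ha0, ha, rfl⟩

theorem card_filter_not_dvd_pos {a : F[X]} (ha0 : a ≠ 0)
    (ha : a.degree < (s.lcm m).degree) : 0 < (s.filter fun i => ¬ m i ∣ a).card := by
  by_contra! h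
  have hall : ∀ i ∈ s, m i ∣ a := by
    simpa using Finset.card_eq_zero.mp (Nat.le_zero.mp h)
  exact (degree_le_of_dvd (Finset.lcm_dvd hall) ha0).not_gt ha

theorem eq_zero_of_card_filter_not_dvd_le {a : F[X]} (ha : a.degree < (s.lcm m).degree)
    (hcard : (s.filter fun i => ¬ m i ∣ a).card ≤ 2 * ((codeDist s m - 1) / 2)) : a = 0 := by
  by_contra ha0
  have hd := codeDist_le_card_filter_not_dvd ha0 ha
  have hpos := card_filter_not_dvd_pos ha0 ha
  omega

/-- An index `i` at which neither `e i` nor `f i` has degree above `lam` has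
`m i ∣ c - [c]_{m i0}`, so only the indices counted on the right can fail. -/
theorem card_filter_not_dvd_sub_modByMonic_le {c : F[X]} {i0 : ι} {lam : ℕ}
    (hgcd : ∀ j ≠ i0, (lam : WithBot ℕ) < (gcd (m i0) (m j)).degree)
    {e f : ι → F[X]} (hcmod : ∀ i, c %ₘ m i = f i - e i)
    (heref : (e i0).degree ≤ lam) (hfref : (f i0).degree ≤ lam) :
    (s.filter fun i => ¬ m i ∣ c - c %ₘ m i0).card ≤
      (s.filter fun i => (lam : WithBot ℕ) < (e i).degree).card +
        (s.filter fun i => (lam : WithBot ℕ) < (f i).degree).card := by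
  refine (Finset.card_le_card fun i hi => ?_).trans (Finset.card_union_le _ _)
  simp only [Finset.mem_union, Finset.mem_filter] at hi ⊢
  by_contra! hlow
  obtain ⟨his, hndvd⟩ := hi
  obtain ⟨hei, hfi⟩ := hlow
  refine hndvd ?_
  rcases eq_or_ne i i0 with rfl | hne
  · exact dvd_sub_modByMonic c (m i)
  · refine dvd_sub_modByMonic_of_degree_lt_gcd (lt_of_le_of_lt ?_ (hgcd i hne))
    rw [hcmod, hcmod]
    exact (degree_sub_le _ _).trans (max_le ((degree_sub_le _ _).trans (max_le (hfi his) (hei his)))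
      ((degree_sub_le _ _).trans (max_le hfref heref)))

end CodeDist

/-- if at most `⌊(d−1)/2⌋` residue errors have degree greater than `λ`
(`λ < τ_1`), and the reference residue (the first one) has error of degree at most
`λ`, then the folding polynomial with respect to `m_1` is uniquely determined:
any two polynomials `a, b` consistent with the received residues in this way
satisfy `a − [a]_{m_1} = b − [b]_{m_1}`, and in particular `deg(a − b) ≤ λ`. -/
theorem stmt9 {F : Type*} [Field F] {L : ℕ}
    (m : Fin L → Polynomial F)
    (i0 : Fin L)
    (d : ℕ) (hd : d = codeDist Finset.univ m)
    (τ1 : ℕ)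
    (hτ1 : τ1 = sInf {n | ∃ j, j ≠ i0 ∧ n = (gcd (m i0) (m j)).natDegree})
    (lam : ℕ) (hlam : lam < τ1)
    (a b : Polynomial F)
    (ha : a.degree < (Finset.univ.lcm m).degree)
    (hb : b.degree < (Finset.univ.lcm m).degree)
    (r : Fin L → Polynomial F)
    (e f : Fin L → Polynomial F)
    (he : ∀ i, e i = r i - a %ₘ m i)
    (hf : ∀ i, f i = r i - b %ₘ m i)
    (hecount : (Finset.univ.filter fun i =>
      (lam : WithBot ℕ) < (e i).degree).card ≤ (d - 1) / 2)
    (hfcount : (Finset.univ.filter fun i =>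
      (lam : WithBot ℕ) < (f i).degree).card ≤ (d - 1) / 2)
    (heref : (e i0).degree ≤ (lam : WithBot ℕ))
    (hfref : (f i0).degree ≤ (lam : WithBot ℕ)) :
    a - a %ₘ m i0 = b - b %ₘ m i0 ∧ (a - b).degree ≤ (lam : WithBot ℕ) := by
  have hcmod : ∀ i, (a - b) %ₘ m i = f i - e i := fun i => by
    rw [he, hf, sub_modByMonic]
    ring
  have hgcd : ∀ j ≠ i0, (lam : WithBot ℕ) < (gcd (m i0) (m j)).degree := fun j hj =>
    coe_lt_degree.mpr (hlam.trans_le (hτ1 ▸ Nat.sInf_le ⟨j, hj, rfl⟩))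
  have hfold : a - b - (a - b) %ₘ m i0 = 0 := by
    refine eq_zero_of_card_filter_not_dvd_le ((degree_sub_modByMonic_le _ _).trans_lt
      ((degree_sub_le a b).trans_lt (max_lt ha hb))) ?_
    have hcard := card_filter_not_dvd_sub_modByMonic_le hgcd hcmod heref hfref (s := Finset.univ)
    omega
  have hrem : ((a - b) %ₘ m i0).degree ≤ lam := by
    rw [hcmod]
    exact (degree_sub_le _ _).trans (max_le hfref heref)
  refine ⟨?_, sub_eq_zero.mp hfold ▸ hrem⟩
  rw [sub_modByMonic] at hfold
  linear_combination hfold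
end

section
/- Let d ≥ 3 be the code distance of the polynomial remainder code with moduli m_1(x), …, m_L(x), and let λ be a nonnegative integer with λ < τ_{(L − 2⌊(d−1)/2⌋)}. Let a(x), b(x) ∈ F[x] with deg(a) < deg(M) and deg(b) < deg(M), and let ã_i(x) (1 ≤ i ≤ L) satisfy deg(ã_i) < deg(m_i); set e_i(x) = ã_i(x) − [a]_{m_i}(x) and f_i(x) = ã_i(x) − [b]_{m_i}(x). If the number of indices i with deg(e_i) > λ is at most ⌊(d−1)/2⌋ and the number of indices i with deg(f_i) > λ is at most ⌊(d−1)/2⌋, then deg(a − b) ≤ λ. (Robust reconstruction holds when at most ⌊(d−1)/2⌋ unrestricted residue errors and arbitrarily many residue errors of degree at most λ occur: the received residues determine the transmitted polynomial up to an error of degree at most λ.) -/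
/-! Two received words with at most ⌊(d−1)/2⌋ residue errors of degree > λ each spoil at most
2⌊(d−1)/2⌋ < d indices together, so the choice of λ leaves an unspoiled index `j` with `τ_j > λ`.
At every unspoiled `i`, `ρ_i = f_i − e_i = [a]_{m_i} − [b]_{m_i}` has degree ≤ λ and
`m_i ∣ (a − b) − ρ_i`; since `deg gcd(m_i, m_j) > λ`, all these `ρ_i` equal `ρ_j`. Hence
`(a − b) − ρ_j` has degree < deg M and is divisible by all but fewer than `d` moduli, so it is `0`. -/

open Polynomial
open scoped Classical

theorem Multiset.card_sub_le_countP_of_lt_nthSmallest {s : Multiset ℕ} {k lam : ℕ}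
    (h : lam < nthSmallest s (k + 1)) : Multiset.card s - k ≤ s.countP (lam < ·) := by
  set l := s.sort (· ≤ ·) with hl
  have hk : k < l.length := by
    by_contra hk
    -- out of range, `nthSmallest` is the default `0`
    simp [nthSmallest, ← hl, List.getElem?_eq_none (not_lt.mp hk)] at h
  have hlk : lam < l[k] := by simpa [nthSmallest, ← hl, List.getElem?_eq_getElem hk] using h
  have hdrop : ∀ x ∈ l.drop k, lam < x := by
    have hsorted := (Multiset.pairwise_sort s (· ≤ ·)).drop (i := k)
    rw [← hl, List.drop_eq_getElem_cons hk, List.pairwise_cons] at hsorted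
    rw [List.drop_eq_getElem_cons hk]
    rintro x (_ | ⟨_, hx⟩)
    exacts [hlk, hlk.trans_le (hsorted.1 x hx)]
  calc Multiset.card s - k = (l.drop k).length := by simp [l]
    _ = (l.drop k).countP (lam < ·) := (List.countP_eq_length.mpr (by simpa using hdrop)).symm
    _ ≤ l.countP (lam < ·) := (List.drop_sublist k l).countP_le
    _ = s.countP (lam < ·) := by rw [hl, ← Multiset.coe_countP, Multiset.sort_eq]

theorem Polynomial.dvd_sub_sub_modByMonic {R : Type*} [Ring R] (p q m : R[X]) :
    m ∣ p - q - (p %ₘ m - q %ₘ m) := by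
  convert dvd_sub (dvd_modByMonic_sub q m) (dvd_modByMonic_sub p m) using 1
  abel

section CodeDistance

variable {F ι : Type*} [Field F]

theorem Polynomial.eq_of_dvd_sub_of_degree_lt_gcd {m n c p q : F[X]} (hp : m ∣ c - p)
    (hq : n ∣ c - q) (hpdeg : p.degree < (gcd m n).degree) (hqdeg : q.degree < (gcd m n).degree) :
    p = q := by
  have hdvd : gcd m n ∣ p - q := by
    simpa using dvd_sub ((gcd_dvd_right m n).trans hq) ((gcd_dvd_left m n).trans hp)
  exact sub_eq_zero.mp <|
    eq_zero_of_dvd_of_degree_lt hdvd ((degree_sub_le p q).trans_lt (max_lt hpdeg hqdeg))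

theorem codeDist_le_card_filter {s : Finset ι} {m : ι → F[X]} {c : F[X]} (hc0 : c ≠ 0)
    (hc : c.degree < (s.lcm m).degree) : codeDist s m ≤ (s.filter fun i => ¬ m i ∣ c).card :=
  Nat.sInf_le ⟨c, hc0, hc, rfl⟩

theorem codeDist_le_card_s10 {s : Finset ι} {m : ι → F[X]} (hM : 0 < (s.lcm m).degree) :
    codeDist s m ≤ s.card :=
  (codeDist_le_card_filter one_ne_zero (by simpa using hM)).trans (Finset.card_filter_le _ _)

theorem eq_of_dvd_sub_of_card_lt_codeDist [Fintype ι] {m ρ : ι → F[X]} {c : F[X]}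
    {B : Finset ι} {lam : ℕ} {j : ι} (hj : j ∉ B) (hdvd : ∀ i ∉ B, m i ∣ c - ρ i)
    (hρ : ∀ i ∉ B, (ρ i).degree ≤ lam)
    (hgcd : ∀ i ≠ j, (lam : WithBot ℕ) < (gcd (m i) (m j)).degree)
    (hc : (c - ρ j).degree < (Finset.univ.lcm m).degree)
    (hB : B.card < codeDist Finset.univ m) : c = ρ j := by
  have hall : ∀ i ∉ B, m i ∣ c - ρ j := by
    intro i hi
    rcases eq_or_ne i j with rfl | hij
    · exact hdvd i hi
    · rw [← eq_of_dvd_sub_of_degree_lt_gcd (hdvd i hi) (hdvd j hj)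
        ((hρ i hi).trans_lt (hgcd i hij)) ((hρ j hj).trans_lt (hgcd i hij))]
      exact hdvd i hi
  by_contra hne
  have hsub : (Finset.univ.filter fun i => ¬ m i ∣ c - ρ j) ⊆ B := fun i hi => by
    by_contra hiB
    exact (Finset.mem_filter.mp hi).2 (hall i hiB)
  exact (codeDist_le_card_filter (sub_ne_zero.mpr hne) hc |>.trans (Finset.card_le_card hsub)
    |>.trans_lt hB).false

end CodeDistance

theorem stmt10_general {F : Type*} [Field F] {L : ℕ} (hL : 2 ≤ L)
    (m : Fin L → Polynomial F)
    (hdeg : ∀ i, 0 < (m i).degree)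
    (hm_lt : ∀ i, (m i).degree < (Finset.univ.lcm m).degree)
    (d : ℕ) (hd : d = codeDist Finset.univ m) (hd3 : 3 ≤ d)
    (tau : Fin L → ℕ)
    (htau : ∀ j, tau j = sInf {n | ∃ i, i ≠ j ∧ n = (gcd (m i) (m j)).natDegree})
    (lam : ℕ)
    (hlam : lam < nthSmallest (Finset.univ.val.map tau) (L - 2 * ((d - 1) / 2)))
    (a b : Polynomial F)
    (ha : a.degree < (Finset.univ.lcm m).degree)
    (hb : b.degree < (Finset.univ.lcm m).degree)
    (r : Fin L → Polynomial F)
    (e f : Fin L → Polynomial F)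
    (he : ∀ i, e i = r i - a %ₘ m i)
    (hf : ∀ i, f i = r i - b %ₘ m i)
    (hecount : (Finset.univ.filter fun i =>
      (lam : WithBot ℕ) < (e i).degree).card ≤ (d - 1) / 2)
    (hfcount : (Finset.univ.filter fun i =>
      (lam : WithBot ℕ) < (f i).degree).card ≤ (d - 1) / 2) :
    (a - b).degree ≤ (lam : WithBot ℕ) := by
  set t := (d - 1) / 2
  have hdL : d ≤ L := by
    simpa [← hd] using codeDist_le_card_s10 ((hdeg ⟨0, by omega⟩).trans (hm_lt _))
  obtain ⟨k, hk⟩ : ∃ k, L - 2 * t = k + 1 := ⟨L - 2 * t - 1, by omega⟩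
  have hT : 2 * t + 1 ≤ (Finset.univ.filter fun j => lam < tau j).card := by
    have h := Multiset.card_sub_le_countP_of_lt_nthSmallest (hk ▸ hlam)
    rw [Multiset.countP_map, ← Finset.filter_val, Finset.card_val, Multiset.card_map,
      Finset.card_val, Finset.card_univ, Fintype.card_fin] at h
    omega
  set B := (Finset.univ.filter fun i => (lam : WithBot ℕ) < (e i).degree) ∪
    (Finset.univ.filter fun i => (lam : WithBot ℕ) < (f i).degree)
  have hB : B.card ≤ 2 * t := (Finset.card_union_le _ _).trans (by omega)
  obtain ⟨j, hj, hjB⟩ := Finset.exists_mem_notMem_of_card_lt_card (hB.trans_lt hT)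
  have hgcd : ∀ i ≠ j, (lam : WithBot ℕ) < (gcd (m i) (m j)).degree := fun i hi =>
    coe_lt_degree.mpr ((Finset.mem_filter.mp hj).2.trans_le (htau j ▸ Nat.sInf_le ⟨i, hi, rfl⟩))
  have hgood : ∀ i ∉ B, (f i - e i).degree ≤ lam := fun i hi => by
    simp only [B, Finset.mem_union, Finset.mem_filter, not_or, not_and, not_lt] at hi
    exact (degree_sub_le _ _).trans (max_le (hi.2 (Finset.mem_univ i)) (hi.1 (Finset.mem_univ i)))
  have hdvd : ∀ i, m i ∣ (a - b) - (f i - e i) := fun i => by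
    rw [he, hf, sub_sub_sub_cancel_left]
    exact dvd_sub_sub_modByMonic a b (m i)
  have hlamM : (lam : WithBot ℕ) < (Finset.univ.lcm m).degree := by
    have : Nontrivial (Fin L) := Fin.nontrivial_iff_two_le.mpr hL
    obtain ⟨i, hi⟩ := exists_ne j
    exact (hgcd i hi).trans_le (degree_le_of_dvd (gcd_dvd_right _ _)
      (ne_zero_of_degree_gt (hdeg j))) |>.trans (hm_lt j)
  have hab := eq_of_dvd_sub_of_card_lt_codeDist hjB (fun i _ => hdvd i) hgood hgcd
    ((degree_sub_le _ _).trans_lt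
      (max_lt ((degree_sub_le a b).trans_lt (max_lt ha hb)) ((hgood j hjB).trans_lt hlamM)))
    (by omega)
  exact hab ▸ hgood j hjB

/-- robust reconstruction under at most `⌊(d−1)/2⌋` unrestricted
residue errors and arbitrarily many residue errors of degree at most `λ`, where
`λ < τ_{(L − 2⌊(d−1)/2⌋)}`: any two polynomials `a, b` of degree less than `deg M`
consistent with the received residues in this way satisfy `deg(a − b) ≤ λ`. -/
theorem stmt10 {F : Type*} [Field F] {L : ℕ} (hL : 2 ≤ L)
    (m : Fin L → Polynomial F)
    (hmonic : ∀ i, (m i).Monic)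
    (hdist : Function.Injective m)
    (hdeg : ∀ i, 0 < (m i).degree)
    (hm_lt : ∀ i, (m i).degree < (Finset.univ.lcm m).degree)
    (d : ℕ) (hd : d = codeDist Finset.univ m) (hd3 : 3 ≤ d)
    (tau : Fin L → ℕ)
    (htau : ∀ j, tau j = sInf {n | ∃ i, i ≠ j ∧ n = (gcd (m i) (m j)).natDegree})
    (lam : ℕ)
    (hlam : lam < nthSmallest (Finset.univ.val.map tau) (L - 2 * ((d - 1) / 2)))
    (a b : Polynomial F)
    (ha : a.degree < (Finset.univ.lcm m).degree)
    (hb : b.degree < (Finset.univ.lcm m).degree)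
    (r : Fin L → Polynomial F)
    (hr : ∀ i, (r i).degree < (m i).degree)
    (e f : Fin L → Polynomial F)
    (he : ∀ i, e i = r i - a %ₘ m i)
    (hf : ∀ i, f i = r i - b %ₘ m i)
    (hecount : (Finset.univ.filter fun i =>
      (lam : WithBot ℕ) < (e i).degree).card ≤ (d - 1) / 2)
    (hfcount : (Finset.univ.filter fun i =>
      (lam : WithBot ℕ) < (f i).degree).card ≤ (d - 1) / 2) :
    (a - b).degree ≤ (lam : WithBot ℕ) :=
  stmt10_general hL m hdeg hm_lt d hd hd3 tau htau lam hlam a b ha hb r e f he hf hecount hfcount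
end

section
/- Let d be the code distance of the polynomial remainder code with moduli m_1(x), …, m_L(x), set A = ⌊(d−1)/2⌋, let θ be an integer with 1 ≤ θ ≤ L − 2A, set B = ⌊(L−θ)/2⌋ − A, let η be a nonnegative integer with η < τ_{(θ)}, and assume A > B. Let a(x), b(x) ∈ F[x] with deg(a) < deg(M) and deg(b) < deg(M), and let r ∈ F^{L·m} be a vector that differs from the coefficient stream s(a) by at most B + ⌊(A−B)/2⌋ bursts of width η and differs from the coefficient stream s(b) by at most B + ⌊(A−B)/2⌋ bursts of width η. Then a(x) = b(x). (When A > B, the code corrects up to B + ⌊(A−B)/2⌋ bursts of width not more than η(θ).) -/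
open Polynomial
open scoped Classical

/-- The coefficient stream of `c`: position `i·mdeg + j` (0-indexed) carries the
coefficient of `x^j` in `[c]_{m_i}`, all moduli having degree `mdeg`. -/
noncomputable def stream {F : Type*} [Field F] {L : ℕ} (mdeg : ℕ)
    (m : Fin L → Polynomial F) (c : Polynomial F) (p : Fin (L * mdeg)) : F :=
  (c %ₘ m ⟨(p : ℕ) / mdeg,
    Nat.div_lt_of_lt_mul (lt_of_lt_of_le p.isLt (le_of_eq (Nat.mul_comm L mdeg)))⟩).coeff ((p : ℕ) % mdeg)

/-- `r` differs from `s` by at most `N` bursts of width `w`: the positions where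
they differ are covered by at most `N` blocks of `w` consecutive positions. -/
def DiffBursts {F : Type*} {n : ℕ} (r s : Fin n → F) (N w : ℕ) : Prop :=
  ∃ starts : Finset ℕ, starts.card ≤ N ∧
    ∀ p : Fin n, r p ≠ s p → ∃ t ∈ starts, t ≤ (p : ℕ) ∧ (p : ℕ) < t + w

/-!
Put `c = a - b ≠ 0`. Block `j` of the stream of `c` is the remainder `c %ₘ m j`, nonzero exactly
when `m j ∤ c`, which happens for at least `d ≥ 2A + 1` blocks; and the two decodings together
cover the stream of `c` by at most `2(B + ⌊(A - B)/2⌋) ≤ A + B` bursts, each of width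
`η < τ_(θ) < mdeg`. The leading coefficient of each nonzero remainder lies in some burst. If
every such burst starts inside the block it serves, the erroneous blocks inject into the bursts and
`2A + 1 ≤ A + B`. Otherwise some burst reaches back from the previous block, so some remainder
`c %ₘ m j` has degree `< η`; since `gcd (m i) (m j)` divides it for every clean block `i`, all
clean blocks have `τ_i < η < τ_(θ)`, so there are fewer than `θ` of them. But a burst meets at
most two blocks, so at least `L - 2(A + B) ≥ θ` blocks are clean.
-/

open Finset

section Bursts

variable {F : Type*} {n : ℕ}

lemma DiffBursts.symm {r s : Fin n → F} {N w : ℕ} (h : DiffBursts r s N w) :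
    DiffBursts s r N w := by
  obtain ⟨S, hcard, hS⟩ := h
  exact ⟨S, hcard, fun p hp => hS p (Ne.symm hp)⟩

lemma DiffBursts.trans {r s t : Fin n → F} {N N' w : ℕ} (h : DiffBursts r s N w)
    (h' : DiffBursts s t N' w) : DiffBursts r t (N + N') w := by
  obtain ⟨S, hcard, hS⟩ := h
  obtain ⟨S', hcard', hS'⟩ := h'
  refine ⟨S ∪ S', (card_union_le S S').trans (add_le_add hcard hcard'), fun p hp => ?_⟩
  by_cases hrs : r p = s p
  · obtain ⟨t, ht, hpt⟩ := hS' p (hrs ▸ hp)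
    exact ⟨t, mem_union_right S ht, hpt⟩
  · obtain ⟨t, ht, hpt⟩ := hS p hrs
    exact ⟨t, mem_union_left S' ht, hpt⟩

lemma diffBursts_iff_sub [AddGroup F] {r s : Fin n → F} {N w : ℕ} :
    DiffBursts r s N w ↔ DiffBursts (r - s) 0 N w := by
  simp only [DiffBursts, Pi.sub_apply, Pi.zero_apply, sub_ne_zero]

end Bursts

lemma Nat.div_eq_or_succ_div_eq_of_le_of_lt_add {k w t j l : ℕ} (hl : l < k) (hw : w ≤ k)
    (ht : t ≤ l + k * j) (ht' : l + k * j < t + w) :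
    t / k = j ∨ (t / k + 1 = j ∧ l < w) := by
  by_cases hjt : k * j ≤ t
  · left
    exact Nat.div_eq_of_lt_le (by rwa [mul_comm]) (by rw [Nat.succ_mul, mul_comm j k]; omega)
  · right
    have hj : j ≠ 0 := by rintro rfl; omega
    have hkj : k * (j - 1) = k * j - k := Nat.mul_sub_one k j
    have hdiv : t / k = j - 1 :=
      Nat.div_eq_of_lt_le (by rw [mul_comm]; omega)
        (by rw [Nat.succ_mul, mul_comm (j - 1) k]; omega)
    omega

section Stream

variable {F : Type*} [Field F] {L mdeg : ℕ} (m : Fin L → F[X])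

lemma stream_finProdFinEquiv (c : F[X]) (j : Fin L) (l : Fin mdeg) :
    stream mdeg m c (finProdFinEquiv (j, l)) = (c %ₘ m j).coeff l := by
  have hk : 0 < mdeg := l.pos
  have hdiv : ((l : ℕ) + mdeg * j) / mdeg = j := by
    rw [Nat.add_mul_div_left _ _ hk, Nat.div_eq_of_lt l.isLt, zero_add]
  have hmod : ((l : ℕ) + mdeg * j) % mdeg = l := by
    rw [Nat.add_mul_mod_self_left, Nat.mod_eq_of_lt l.isLt]
  simp only [stream, finProdFinEquiv_apply_val, hdiv, hmod]

lemma stream_sub (a b : F[X]) : stream mdeg m (a - b) = stream mdeg m a - stream mdeg m b := by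
  ext p
  simp only [stream, sub_modByMonic, coeff_sub, Pi.sub_apply]

end Stream

section Polynomial

variable {F : Type*} [Field F]

lemma natDegree_gcd_lt_of_monic_of_ne {p q : F[X]} (hp : p.Monic) (hq : q.Monic) (hpq : p ≠ q)
    (hdeg : p.natDegree = q.natDegree) : (gcd p q).natDegree < p.natDegree := by
  by_contra! h
  refine hpq (eq_of_monic_of_associated hp hq ?_)
  exact (associated_of_dvd_of_natDegree_le (gcd_dvd_left p q) hp.ne_zero h).symm.trans
    (associated_of_dvd_of_natDegree_le (gcd_dvd_right p q) hq.ne_zero (hdeg ▸ h))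

lemma dvd_modByMonic_of_dvd {d c q : F[X]} (hq : q.Monic) (hdq : d ∣ q) (hdc : d ∣ c) :
    d ∣ c %ₘ q := by
  rw [modByMonic_eq_mod c hq]
  exact (EuclideanDomain.dvd_mod_iff hdq).2 hdc

end Polynomial

lemma nthSmallest_mem {s : Multiset ℕ} {θ : ℕ} (h : θ - 1 < Multiset.card s) :
    nthSmallest s θ ∈ s := by
  rw [nthSmallest, List.getD_eq_getElem _ _ (by rwa [Multiset.length_sort]),
    ← Multiset.mem_sort (· ≤ ·)]
  exact List.getElem_mem _

lemma card_filter_lt_nthSmallest_le (s : Multiset ℕ) (θ : ℕ) :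
    Multiset.card (s.filter (· < nthSmallest s θ)) ≤ θ - 1 := by
  set l := s.sort (· ≤ ·)
  have hs : s = l := (Multiset.sort_eq s (· ≤ ·)).symm
  by_cases hθ : θ - 1 < l.length
  · have hsorted : (l.drop (θ - 1)).Pairwise (· ≤ ·) := (Multiset.pairwise_sort s _).drop
    rw [List.drop_eq_getElem_cons hθ, List.pairwise_cons] at hsorted
    have hdrop : (l.drop (θ - 1)).filter (· < l[θ - 1]) = [] := by
      rw [List.filter_eq_nil_iff, List.drop_eq_getElem_cons hθ]
      intro x hx
      simpa using (List.mem_cons.1 hx).elim (fun h => h.ge) (hsorted.1 x)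
    rw [show nthSmallest s θ = l[θ - 1] from List.getD_eq_getElem _ _ hθ, hs,
      Multiset.filter_coe, Multiset.coe_card]
    generalize l[θ - 1] = v at hdrop ⊢
    rw [← List.take_append_drop (θ - 1) l, List.filter_append, List.length_append, hdrop,
      List.length_nil, add_zero]
    exact (List.length_filter_le _ _).trans (List.length_take_le _ _)
  · have hv : nthSmallest s θ = 0 := List.getD_eq_default _ _ (not_lt.1 hθ)
    simp [hv]

section Code

variable {F : Type*} [Field F] {L mdeg : ℕ} {m : Fin L → F[X]}

noncomputable def minGcdNatDegree (m : Fin L → F[X]) (j : Fin L) : ℕ :=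
  sInf {n | ∃ i, i ≠ j ∧ n = (gcd (m i) (m j)).natDegree}

lemma minGcdNatDegree_le {i j : Fin L} (hij : i ≠ j) :
    minGcdNatDegree m j ≤ (gcd (m i) (m j)).natDegree :=
  Nat.sInf_le ⟨i, hij, rfl⟩

lemma minGcdNatDegree_lt (hL : 2 ≤ L) (hmonic : ∀ i, (m i).Monic) (hinj : Function.Injective m)
    (hsamedeg : ∀ i, (m i).natDegree = mdeg) (j : Fin L) : minGcdNatDegree m j < mdeg := by
  have : Nontrivial (Fin L) := Fin.nontrivial_iff_two_le.2 hL
  obtain ⟨i, hij⟩ := exists_ne j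
  calc minGcdNatDegree m j ≤ (gcd (m i) (m j)).natDegree := minGcdNatDegree_le hij
    _ < (m i).natDegree := natDegree_gcd_lt_of_monic_of_ne (hmonic i) (hmonic j)
        (hinj.ne hij) (by rw [hsamedeg, hsamedeg])
    _ = mdeg := hsamedeg i

lemma codeDist_le_card_filter_not_dvd_s13 {c : F[X]} (hc : c ≠ 0)
    (hdeg : c.degree < (univ.lcm m).degree) :
    codeDist univ m ≤ (univ.filter fun j => ¬ m j ∣ c).card :=
  Nat.sInf_le ⟨c, hc, hdeg, rfl⟩

lemma card_filter_dvd_le_of_not_dvd (hmonic : ∀ i, (m i).Monic) {c : F[X]} {j : Fin L}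
    (hj : ¬ m j ∣ c) {θ : ℕ}
    (hlt : (c %ₘ m j).natDegree < nthSmallest (univ.val.map (minGcdNatDegree m)) θ) :
    (univ.filter fun i => m i ∣ c).card ≤ θ - 1 := by
  set v := nthSmallest (univ.val.map (minGcdNatDegree m)) θ
  have hsub :
      (univ.filter fun i => m i ∣ c) ⊆ univ.filter fun i => minGcdNatDegree m i < v := by
    intro i hi
    have hic : m i ∣ c := (mem_filter.1 hi).2
    have hji : j ≠ i := by rintro rfl; exact hj hic
    have he : c %ₘ m j ≠ 0 := fun h => hj ((modByMonic_eq_zero_iff_dvd (hmonic j)).1 h)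
    have hgcd : gcd (m j) (m i) ∣ c %ₘ m j :=
      dvd_modByMonic_of_dvd (hmonic j) (gcd_dvd_left _ _) ((gcd_dvd_right _ _).trans hic)
    exact mem_filter.2 ⟨mem_univ i, ((minGcdNatDegree_le hji).trans
      (natDegree_le_of_dvd hgcd he)).trans_lt hlt⟩
  calc (univ.filter fun i => m i ∣ c).card
      ≤ (univ.filter fun i => minGcdNatDegree m i < v).card := card_le_card hsub
    _ = Multiset.card ((univ.val.map (minGcdNatDegree m)).filter (· < v)) := by
        rw [Multiset.filter_map, Multiset.card_map]; rfl
    _ ≤ θ - 1 := card_filter_lt_nthSmallest_le _ θ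

variable {c : F[X]} {η : ℕ} {S : Finset ℕ}

lemma exists_burst_start_of_not_dvd (hmonic : ∀ i, (m i).Monic)
    (hsamedeg : ∀ i, (m i).natDegree = mdeg) (hη : η ≤ mdeg)
    (hS : ∀ p, stream mdeg m c p ≠ 0 → ∃ t ∈ S, t ≤ p ∧ (p : ℕ) < t + η)
    {j : Fin L} (hj : ¬ m j ∣ c) :
    ∃ t ∈ S, t / mdeg = j ∨ (t / mdeg + 1 = j ∧ (c %ₘ m j).natDegree < η) := by
  have he : c %ₘ m j ≠ 0 := fun h => hj ((modByMonic_eq_zero_iff_dvd (hmonic j)).1 h)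
  have hl : (c %ₘ m j).natDegree < mdeg :=
    hsamedeg j ▸ natDegree_lt_natDegree he (degree_modByMonic_lt c (hmonic j))
  obtain ⟨t, ht, hle, hlt⟩ := hS (finProdFinEquiv (j, ⟨_, hl⟩)) (by
    rw [stream_finProdFinEquiv]
    exact leadingCoeff_ne_zero.2 he)
  exact ⟨t, ht, Nat.div_eq_or_succ_div_eq_of_le_of_lt_add hl hη hle hlt⟩

lemma card_filter_not_dvd_le_two_mul (hmonic : ∀ i, (m i).Monic)
    (hsamedeg : ∀ i, (m i).natDegree = mdeg) (hη : η ≤ mdeg)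
    (hS : ∀ p, stream mdeg m c p ≠ 0 → ∃ t ∈ S, t ≤ p ∧ (p : ℕ) < t + η) :
    (univ.filter fun j => ¬ m j ∣ c).card ≤ 2 * S.card := by
  have hsub : (univ.filter fun j => ¬ m j ∣ c).image Fin.val ⊆
      S.biUnion fun t => {t / mdeg, t / mdeg + 1} := by
    simp only [subset_iff, mem_image, mem_filter, mem_univ, true_and, mem_biUnion, mem_insert,
      mem_singleton, forall_exists_index, and_imp]
    rintro _ j hj rfl
    obtain ⟨t, ht, h⟩ := exists_burst_start_of_not_dvd hmonic hsamedeg hη hS hj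
    exact ⟨t, ht, by omega⟩
  calc (univ.filter fun j => ¬ m j ∣ c).card
      = ((univ.filter fun j => ¬ m j ∣ c).image Fin.val).card :=
        (card_image_of_injective _ Fin.val_injective).symm
    _ ≤ (S.biUnion fun t => {t / mdeg, t / mdeg + 1}).card := card_le_card hsub
    _ ≤ 2 * S.card := by
        rw [mul_comm]
        exact card_biUnion_le_card_mul _ _ _ fun t _ => card_le_two

lemma card_filter_not_dvd_le (hmonic : ∀ i, (m i).Monic)
    (hsamedeg : ∀ i, (m i).natDegree = mdeg) (hη : η ≤ mdeg)
    (hS : ∀ p, stream mdeg m c p ≠ 0 → ∃ t ∈ S, t ≤ p ∧ (p : ℕ) < t + η)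
    (hlarge : ∀ j, ¬ m j ∣ c → η ≤ (c %ₘ m j).natDegree) :
    (univ.filter fun j => ¬ m j ∣ c).card ≤ S.card := by
  have hsub : (univ.filter fun j => ¬ m j ∣ c).image Fin.val ⊆ S.image (· / mdeg) := by
    simp only [subset_iff, mem_image, mem_filter, mem_univ, true_and, forall_exists_index,
      and_imp]
    rintro _ j hj rfl
    obtain ⟨t, ht, h⟩ := exists_burst_start_of_not_dvd hmonic hsamedeg hη hS hj
    exact ⟨t, ht, h.resolve_right fun h' => (hlarge j hj).not_gt h'.2⟩
  calc (univ.filter fun j => ¬ m j ∣ c).card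
      = ((univ.filter fun j => ¬ m j ∣ c).image Fin.val).card :=
        (card_image_of_injective _ Fin.val_injective).symm
    _ ≤ (S.image (· / mdeg)).card := card_le_card hsub
    _ ≤ S.card := card_image_le

end Code

theorem stmt13_general {F : Type*} [Field F] {L : ℕ} (hL : 2 ≤ L)
    (m : Fin L → Polynomial F)
    (hmonic : ∀ i, (m i).Monic)
    (hdist : Function.Injective m)
    (mdeg : ℕ)
    (hsamedeg : ∀ i, (m i).natDegree = mdeg)
    (d : ℕ) (hd : d = codeDist Finset.univ m)
    (A : ℕ) (hA : A = (d - 1) / 2)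
    (θ : ℕ) (hθ1 : 1 ≤ θ) (hθ2 : θ ≤ L - 2 * A)
    (B : ℕ) (hB : B = (L - θ) / 2 - A)
    (tau : Fin L → ℕ)
    (htau : ∀ j, tau j = sInf {n | ∃ i, i ≠ j ∧ n = (gcd (m i) (m j)).natDegree})
    (η : ℕ)
    (hη : η < nthSmallest (Finset.univ.val.map tau) θ)
    (hAB : B < A)
    (a b : Polynomial F)
    (ha : a.degree < (Finset.univ.lcm m).degree)
    (hb : b.degree < (Finset.univ.lcm m).degree)
    (r : Fin (L * mdeg) → F)
    (hra : DiffBursts r (stream mdeg m a) (B + (A - B) / 2) η)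
    (hrb : DiffBursts r (stream mdeg m b) (B + (A - B) / 2) η) :
    a = b := by
  obtain rfl : tau = minGcdNatDegree m := funext htau
  by_contra hne
  have hdU : d ≤ (univ.filter fun j => ¬ m j ∣ (a - b)).card :=
    hd ▸ codeDist_le_card_filter_not_dvd_s13 (sub_ne_zero.2 hne)
      ((degree_sub_le a b).trans_lt (max_lt ha hb))
  obtain ⟨S, hScard, hS⟩ := diffBursts_iff_sub.1 (hra.symm.trans hrb)
  rw [← stream_sub] at hS
  have hθL : θ - 1 < Multiset.card (univ.val.map (minGcdNatDegree m)) := by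
    simp only [Fin.univ_val_map, Multiset.coe_card, List.length_ofFn]; omega
  have hηm : η ≤ mdeg := by
    obtain ⟨j, -, hj⟩ := Multiset.mem_map.1 (nthSmallest_mem hθL)
    exact (hη.trans (hj ▸ minGcdNatDegree_lt hL hmonic hdist hsamedeg j)).le
  by_cases hlarge : ∀ j, ¬ m j ∣ (a - b) → η ≤ ((a - b) %ₘ m j).natDegree
  · have hUS := card_filter_not_dvd_le hmonic hsamedeg hηm hS hlarge
    omega
  · push Not at hlarge
    obtain ⟨j, hj, hjη⟩ := hlarge
    have hU := card_filter_not_dvd_le_two_mul hmonic hsamedeg hηm hS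
    have hK := card_filter_dvd_le_of_not_dvd hmonic hj (hjη.trans hη)
    have hUK := card_filter_add_card_filter_not (s := univ) fun j => m j ∣ (a - b)
    rw [card_univ, Fintype.card_fin] at hUK
    omega

/-- when `A > B`, the code corrects up to `B + ⌊(A−B)/2⌋` bursts of width at most
`η(θ)`: any two polynomials of degree less than `deg M` whose coefficient streams
both differ from the received vector `r` by at most `B + ⌊(A−B)/2⌋` bursts of width `η` are
equal. -/
theorem stmt13 {F : Type*} [Field F] {L : ℕ} (hL : 2 ≤ L)
    (m : Fin L → Polynomial F)
    (hmonic : ∀ i, (m i).Monic)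
    (hdist : Function.Injective m)
    (hdeg : ∀ i, 0 < (m i).degree)
    (hm_lt : ∀ i, (m i).degree < (Finset.univ.lcm m).degree)
    (mdeg : ℕ) (hmdeg : 1 ≤ mdeg)
    (hsamedeg : ∀ i, (m i).natDegree = mdeg)
    (d : ℕ) (hd : d = codeDist Finset.univ m)
    (A : ℕ) (hA : A = (d - 1) / 2)
    (θ : ℕ) (hθ1 : 1 ≤ θ) (hθ2 : θ ≤ L - 2 * A)
    (B : ℕ) (hB : B = (L - θ) / 2 - A)
    (tau : Fin L → ℕ)
    (htau : ∀ j, tau j = sInf {n | ∃ i, i ≠ j ∧ n = (gcd (m i) (m j)).natDegree})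
    (η : ℕ)
    (hη : η < nthSmallest (Finset.univ.val.map tau) θ)
    (hAB : B < A)
    (a b : Polynomial F)
    (ha : a.degree < (Finset.univ.lcm m).degree)
    (hb : b.degree < (Finset.univ.lcm m).degree)
    (r : Fin (L * mdeg) → F)
    (hra : DiffBursts r (stream mdeg m a) (B + (A - B) / 2) η)
    (hrb : DiffBursts r (stream mdeg m b) (B + (A - B) / 2) η) :
    a = b :=
  stmt13_general hL m hmonic hdist mdeg hsamedeg d hd A hA θ hθ1 hθ2 B hB tau htau η hη hAB a b ha
    hb r hra hrb
end
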